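/- Let D be a finitely generated abelian group and S a D-graded ring. For homogeneous f ∈ S, let H_f ⊆ S denote the set of homogeneous divisors of powers of f, and let C_f ⊆ D ⊗ ℝ be the closed convex cone generated by the degrees of elements of H_f. Suppose f, g ∈ S are relevant and deg(g) = Σ n_i deg(f_i) with n_i ∈ ℕ and f_i ∈ H_f. Then the multiplication map S_{(f)} ⊗_{S_0} S_{(g)} → S_{(fg)} is surjective, where S_{(h)} denotes the degree-zero part of the localization S_h. -/
import Mathlib


/-- A homogeneous element `f` of a `D`-graded ring is *relevant* if some power `f^n`
(`n ≥ 1`) factors into homogeneous elements whose degrees generate a finite-index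
subgroup of `D`. -/
def Relevant {D A : Type*} [AddCommGroup D] [CommRing A]
    (𝒜 : D → AddSubgroup A) (f : A) : Prop :=
  (∃ d, f ∈ 𝒜 d) ∧
    ∃ n : ℕ, 1 ≤ n ∧ ∃ (ℓ : ℕ) (g : Fin ℓ → A) (e : Fin ℓ → D),
      (∀ i, g i ∈ 𝒜 (e i)) ∧ f ^ n = ∏ i, g i ∧
      (AddSubgroup.closure (Set.range e)).FiniteIndex

/-- If a homogeneous element divides a homogeneous element, it has a homogeneous
cofactor. -/
lemma hom_quot {D S : Type*} [AddCommGroup D] [DecidableEq D] [CommRing S]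
    (𝒜 : D → AddSubgroup S) [GradedRing 𝒜] {a b : S} {d e : D}
    (ha : a ∈ 𝒜 d) (hb : b ∈ 𝒜 e) (h : a ∣ b) :
    ∃ c, c ∈ 𝒜 (e - d) ∧ a * c = b := by
  obtain ⟨c, rfl⟩ := h
  refine ⟨(DirectSum.decompose 𝒜 c (e - d) : S), SetLike.coe_mem _, ?_⟩
  have h1 := DirectSum.coe_decompose_mul_add_of_left_mem 𝒜 (j := e - d) (b := c) ha
  rw [show d + (e - d) = e by abel] at h1
  rw [← h1, DirectSum.decompose_of_mem_same 𝒜 hb]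

/-- Let `f, g` be relevant homogeneous elements of degrees `df, dg` of a
ring `S` graded by a finitely generated abelian group `D`, and suppose
`dg = Σ nᵢ • deg(fᵢ)` where each `fᵢ` is a homogeneous divisor of a power of `f`.
Then the multiplication map `S_{(f)} ⊗_{S_0} S_{(g)} → S_{(fg)}` is surjective: inside
the localization `L = S_{fg}`, every degree-zero element `a/(fg)^k` lies in the subring
generated by `S_{(f)} ∪ S_{(g)}` (whose elements are the sums of products of elements of
`S_{(f)}` and `S_{(g)}`). -/
theorem stmt_13 {D S : Type*} [AddCommGroup D] [AddGroup.FG D] [DecidableEq D]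
    [CommRing S] (𝒜 : D → AddSubgroup S) [GradedRing 𝒜]
    (f g : S) (df dg : D) (hfd : f ∈ 𝒜 df) (hgd : g ∈ 𝒜 dg)
    (hf : Relevant 𝒜 f) (hg : Relevant 𝒜 g)
    (ℓ : ℕ) (fi : Fin ℓ → S) (ei : Fin ℓ → D) (ni : Fin ℓ → ℕ)
    (hfi : ∀ i, fi i ∈ 𝒜 (ei i)) (hdiv : ∀ i, ∃ m : ℕ, fi i ∣ f ^ m)
    (hsum : dg = ∑ i, ni i • ei i) :
    ∀ x : Localization.Away (f * g),
      (∃ (k : ℕ) (a : S), a ∈ 𝒜 (k • (df + dg)) ∧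
        x * algebraMap S (Localization.Away (f * g)) ((f * g) ^ k) =
          algebraMap S (Localization.Away (f * g)) a) →
      x ∈ Subring.closure
        ({y : Localization.Away (f * g) | ∃ (k : ℕ) (a : S), a ∈ 𝒜 (k • df) ∧
            y * algebraMap S (Localization.Away (f * g)) (f ^ k) =
              algebraMap S (Localization.Away (f * g)) a} ∪
         {y : Localization.Away (f * g) | ∃ (k : ℕ) (a : S), a ∈ 𝒜 (k • dg) ∧
            y * algebraMap S (Localization.Away (f * g)) (g ^ k) =
              algebraMap S (Localization.Away (f * g)) a}) := by
  intro x hxh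
  obtain ⟨k, a, ha, hx⟩ := hxh
  set φ : S →+* Localization.Away (f * g) := algebraMap S (Localization.Away (f * g)) with hφ
  -- homogeneous cofactors
  have key : ∀ i, ∃ (m : ℕ) (q : S), q ∈ 𝒜 (m • df - ei i) ∧ fi i * q = f ^ m := by
    intro i
    obtain ⟨m, hm⟩ := hdiv i
    obtain ⟨c, hc, hac⟩ := hom_quot 𝒜 (hfi i) (SetLike.pow_mem_graded m hfd) hm
    exact ⟨m, c, hc, hac⟩
  choose m q hq hfq using key
  set M : ℕ := ∑ i, (k * ni i) * m i with hM
  set P : S := ∏ i, fi i ^ (k * ni i) with hPdef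
  set Q : S := ∏ i, q i ^ (k * ni i) with hQdef
  have hP : P ∈ 𝒜 (k • dg) := by
    have h1 : P ∈ 𝒜 (∑ i, (k * ni i) • ei i) :=
      SetLike.prod_pow_mem_graded 𝒜 ei fi _ (fun i _ => hfi i)
    have h2 : (∑ i, (k * ni i) • ei i) = k • dg := by
      rw [hsum, Finset.smul_sum]
      exact Finset.sum_congr rfl fun i _ => by rw [smul_smul]
    rwa [h2] at h1
  have hQ : Q ∈ 𝒜 (M • df - k • dg) := by
    have h1 : Q ∈ 𝒜 (∑ i, (k * ni i) • (m i • df - ei i)) :=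
      SetLike.prod_pow_mem_graded 𝒜 _ q _ (fun i _ => hq i)
    have h2 : (∑ i, (k * ni i) • (m i • df - ei i)) = M • df - k • dg := by
      rw [hsum, Finset.smul_sum, hM, Finset.sum_smul, ← Finset.sum_sub_distrib]
      exact Finset.sum_congr rfl fun i _ => by
        rw [smul_sub, smul_smul, smul_smul, mul_assoc]
    rwa [h2] at h1
  have hPQ : P * Q = f ^ M := by
    rw [hPdef, hQdef, ← Finset.prod_mul_distrib, hM, ← Finset.prod_pow_eq_pow_sum]
    exact Finset.prod_congr rfl fun i _ => by
      rw [← mul_pow, hfq i, ← pow_mul, mul_comm (m i)]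
  -- the inverse of f*g in T
  have hufg : IsUnit (φ (f * g)) :=
    IsLocalization.map_units (Localization.Away (f * g)) (⟨f * g, Submonoid.mem_powers _⟩ : Submonoid.powers (f * g))
  obtain ⟨u, hu⟩ := hufg.exists_right_inv
  set y1 := φ a * φ Q * φ g ^ (M + k) * u ^ (M + k) with hy1def
  set y2 := φ P * φ f ^ k * u ^ k with hy2def
  have hy1 : y1 * φ (f ^ (M + k)) = φ (a * Q) := by
    have : y1 * φ (f ^ (M + k)) = φ a * φ Q * (φ (f * g) * u) ^ (M + k) := by
      rw [hy1def, map_pow, map_mul, mul_pow]; ring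
    rw [this, hu, one_pow, mul_one, map_mul]
  have hy2 : y2 * φ (g ^ k) = φ P := by
    have : y2 * φ (g ^ k) = φ P * (φ (f * g) * u) ^ k := by
      rw [hy2def, map_pow, map_mul, mul_pow]; ring
    rw [this, hu, one_pow, mul_one]
  have hxu : x = φ a * u ^ k := by
    have h1 : φ ((f * g) ^ k) * u ^ k = 1 := by
      rw [map_pow, ← mul_pow, hu, one_pow]
    calc x = x * (φ ((f * g) ^ k) * u ^ k) := by rw [h1, mul_one]
      _ = φ a * u ^ k := by rw [← mul_assoc, hx]
  have hxy : x = y1 * y2 := by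
    have h2 : φ Q * φ P = φ f ^ M := by rw [← map_mul, mul_comm Q P, hPQ, map_pow]
    have h3 : y1 * y2 = (φ Q * φ P) * (φ a * φ g ^ (M + k) * φ f ^ k * u ^ (M + k) * u ^ k) := by
      rw [hy1def, hy2def]; ring
    rw [h3, h2]
    have h4 : φ f ^ M * (φ a * φ g ^ (M + k) * φ f ^ k * u ^ (M + k) * u ^ k)
        = φ a * (φ (f * g) * u) ^ (M + k) * u ^ k := by
      rw [map_mul, mul_pow, mul_pow]; ring
    rw [h4, hu, one_pow, mul_one, hxu]
  have haQ : a * Q ∈ 𝒜 ((M + k) • df) := by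
    have h1 : a * Q ∈ 𝒜 (k • (df + dg) + (M • df - k • dg)) := SetLike.mul_mem_graded ha hQ
    have h2 : k • (df + dg) + (M • df - k • dg) = (M + k) • df := by
      rw [smul_add, add_smul]; abel
    rwa [h2] at h1
  rw [hxy]
  exact Subring.mul_mem _
    (Subring.subset_closure (Or.inl ⟨M + k, a * Q, haQ, hy1⟩))
    (Subring.subset_closure (Or.inr ⟨k, P, hP, hy2⟩))
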